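/- A Markov chain on a finite state space with a regular (everywhere positive) transition matrix P converges geometrically to its unique stationary distribution: if ϑ = min_{i,j} P_{i,j} > 0, then for all states i, j and all n ≥ 1, |[P^n]_{i,j} − π_j| ≤ (1 − 2ϑ)^n, where π is the unique stationary distribution of P. -/
import Mathlib


open Matrix

/-- geometric convergence of a finite Markov chain with a regular
(everywhere positive) transition matrix to its stationary distribution. -/
theorem markov_geometric_convergence {N : ℕ} (hN : 2 ≤ N)
    (P : Matrix (Fin N) (Fin N) ℝ)
    (hpos : ∀ i j, 0 < P i j)
    (hrow : ∀ i, ∑ j, P i j = 1)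
    (ϑ : ℝ) (hϑ : ϑ = ⨅ p : Fin N × Fin N, P p.1 p.2)
    (pv : Fin N → ℝ) (hpv0 : ∀ j, 0 ≤ pv j) (hpv1 : ∑ j, pv j = 1)
    (hstat : pv ᵥ* P = pv)
    (n : ℕ) (hn : 1 ≤ n) (i j : Fin N) :
    |(P ^ n) i j - pv j| ≤ (1 - 2 * ϑ) ^ n := by
  have hNpos : 0 < N := by omega
  have hne : (Finset.univ : Finset (Fin N)).Nonempty :=
    ⟨⟨0, hNpos⟩, Finset.mem_univ _⟩
  -- ϑ is a lower bound on entries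
  haveI : Nonempty (Fin N) := ⟨⟨0, hNpos⟩⟩
  have hϑle : ∀ a b, ϑ ≤ P a b := by
    intro a b
    rw [hϑ]
    exact ciInf_le (Set.finite_range _).bddBelow (⟨a, b⟩ : Fin N × Fin N)
  -- ϑ is positive
  have hϑpos : 0 < ϑ := by
    obtain ⟨p0, hp0⟩ := Finite.exists_min (fun p : Fin N × Fin N => P p.1 p.2)
    have h1 : P p0.1 p0.2 ≤ ϑ := by rw [hϑ]; exact le_ciInf hp0
    exact lt_of_lt_of_le (hpos _ _) h1
  -- 2ϑ ≤ 1
  have hϑhalf : 2 * ϑ ≤ 1 := by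
    set i0 : Fin N := ⟨0, hNpos⟩
    set j0 : Fin N := ⟨0, hNpos⟩
    set j1 : Fin N := ⟨1, by omega⟩
    have hne01 : j0 ≠ j1 := by simp [j0, j1, Fin.ext_iff]
    have hsub : ({j0, j1} : Finset (Fin N)) ⊆ Finset.univ := Finset.subset_univ _
    have h1 : ∑ k ∈ ({j0, j1} : Finset (Fin N)), P i0 k ≤ ∑ k, P i0 k := by
      apply Finset.sum_le_sum_of_subset_of_nonneg hsub
      intro k _ _
      exact (hpos i0 k).le
    rw [Finset.sum_pair hne01, hrow i0] at h1
    have := hϑle i0 j0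
    have := hϑle i0 j1
    linarith
  have h1sub : (0:ℝ) ≤ 1 - 2 * ϑ := by linarith
  -- key step bounds
  have stepU : ∀ (x : Fin N → ℝ) (a : Fin N),
      ∑ k, P a k * x k ≤
        Finset.univ.sup' hne x - ϑ * (Finset.univ.sup' hne x - Finset.univ.inf' hne x) := by
    intro x a
    set M := Finset.univ.sup' hne x with hM
    set m := Finset.univ.inf' hne x with hm
    obtain ⟨k0, _, hk0⟩ := Finset.exists_mem_eq_inf' hne x
    have hsplit : P a k0 * x k0 + ∑ k ∈ Finset.univ.erase k0, P a k * x k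
        = ∑ k, P a k * x k :=
      Finset.add_sum_erase Finset.univ (fun k => P a k * x k) (Finset.mem_univ k0)
    have hrest : ∑ k ∈ Finset.univ.erase k0, P a k * x k
        ≤ ∑ k ∈ Finset.univ.erase k0, P a k * M := by
      apply Finset.sum_le_sum
      intro k _
      exact mul_le_mul_of_nonneg_left (Finset.le_sup' x (Finset.mem_univ k)) (hpos a k).le
    have hrow' : ∑ k ∈ Finset.univ.erase k0, P a k = 1 - P a k0 := by
      have := Finset.add_sum_erase Finset.univ (P a) (Finset.mem_univ k0)
      rw [hrow a] at this
      linarith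
    have hrestM : ∑ k ∈ Finset.univ.erase k0, P a k * M = (1 - P a k0) * M := by
      rw [← Finset.sum_mul, hrow']
    have hxk0 : x k0 = m := hk0.symm
    have hmM : m ≤ M := le_trans (Finset.inf'_le x (Finset.mem_univ ⟨0, hNpos⟩)) (Finset.le_sup' x (Finset.mem_univ ⟨0, hNpos⟩))
    have hPa : ϑ ≤ P a k0 := hϑle a k0
    nlinarith [hsplit, hrest, hrestM]
  have stepL : ∀ (x : Fin N → ℝ) (a : Fin N),
      Finset.univ.inf' hne x + ϑ * (Finset.univ.sup' hne x - Finset.univ.inf' hne x)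
        ≤ ∑ k, P a k * x k := by
    intro x a
    set M := Finset.univ.sup' hne x with hM
    set m := Finset.univ.inf' hne x with hm
    obtain ⟨k1, _, hk1⟩ := Finset.exists_mem_eq_sup' hne x
    have hsplit : P a k1 * x k1 + ∑ k ∈ Finset.univ.erase k1, P a k * x k
        = ∑ k, P a k * x k :=
      Finset.add_sum_erase Finset.univ (fun k => P a k * x k) (Finset.mem_univ k1)
    have hrest : ∑ k ∈ Finset.univ.erase k1, P a k * m
        ≤ ∑ k ∈ Finset.univ.erase k1, P a k * x k := by
      apply Finset.sum_le_sum
      intro k _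
      exact mul_le_mul_of_nonneg_left (Finset.inf'_le x (Finset.mem_univ k)) (hpos a k).le
    have hrow' : ∑ k ∈ Finset.univ.erase k1, P a k = 1 - P a k1 := by
      have := Finset.add_sum_erase Finset.univ (P a) (Finset.mem_univ k1)
      rw [hrow a] at this
      linarith
    have hrestm : ∑ k ∈ Finset.univ.erase k1, P a k * m = (1 - P a k1) * m := by
      rw [← Finset.sum_mul, hrow']
    have hxk1 : x k1 = M := hk1.symm
    have hmM : m ≤ M := le_trans (Finset.inf'_le x (Finset.mem_univ ⟨0, hNpos⟩)) (Finset.le_sup' x (Finset.mem_univ ⟨0, hNpos⟩))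
    have hPa : ϑ ≤ P a k1 := hϑle a k1
    nlinarith [hsplit, hrest, hrestm]
  -- oscillation bound by induction
  have key : ∀ n : ℕ, 1 ≤ n →
      Finset.univ.sup' hne (fun a => (P ^ n) a j) -
        Finset.univ.inf' hne (fun a => (P ^ n) a j) ≤ (1 - 2 * ϑ) ^ n := by
    intro n hn
    induction n, hn using Nat.le_induction with
    | base =>
      simp only [pow_one]
      have hsup : Finset.univ.sup' hne (fun a => P a j) ≤ 1 - ϑ := by
        apply Finset.sup'_le
        intro a _
        -- there is j' ≠ j
        have hNlt : (1:ℕ) < N := by omega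
        set j' : Fin N := if j = ⟨0, hNpos⟩ then ⟨1, hNlt⟩ else ⟨0, hNpos⟩ with hj'
        have hjj' : j ≠ j' := by
          rw [hj']
          by_cases h : j = ⟨0, hNpos⟩
          · rw [if_pos h, h]
            simp [Fin.ext_iff]
          · rw [if_neg h]
            exact h
        have hsub : ({j, j'} : Finset (Fin N)) ⊆ Finset.univ := Finset.subset_univ _
        have h1 : ∑ k ∈ ({j, j'} : Finset (Fin N)), P a k ≤ ∑ k, P a k := by
          apply Finset.sum_le_sum_of_subset_of_nonneg hsub
          intro k _ _
          exact (hpos a k).le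
        rw [Finset.sum_pair hjj', hrow a] at h1
        have := hϑle a j'
        linarith
      have hinf : ϑ ≤ Finset.univ.inf' hne (fun a => P a j) := by
        apply Finset.le_inf'
        intro a _
        exact hϑle a j
      linarith
    | succ n hn ih =>
      set x : Fin N → ℝ := fun a => (P ^ n) a j with hx
      have happ : ∀ a, (P ^ (n + 1)) a j = ∑ k, P a k * x k := by
        intro a
        rw [pow_succ']
        rw [Matrix.mul_apply]
      have hsup : Finset.univ.sup' hne (fun a => (P ^ (n+1)) a j) ≤
          Finset.univ.sup' hne x - ϑ * (Finset.univ.sup' hne x - Finset.univ.inf' hne x) := by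
        apply Finset.sup'_le
        intro a _
        rw [happ a]
        exact stepU x a
      have hinf : Finset.univ.inf' hne x + ϑ * (Finset.univ.sup' hne x - Finset.univ.inf' hne x)
          ≤ Finset.univ.inf' hne (fun a => (P ^ (n+1)) a j) := by
        apply Finset.le_inf'
        intro a _
        rw [happ a]
        exact stepL x a
      have hcontr : Finset.univ.sup' hne (fun a => (P ^ (n+1)) a j) -
          Finset.univ.inf' hne (fun a => (P ^ (n+1)) a j)
          ≤ (1 - 2*ϑ) * (Finset.univ.sup' hne x - Finset.univ.inf' hne x) := by
        linarith
      calc Finset.univ.sup' hne (fun a => (P ^ (n+1)) a j) -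
            Finset.univ.inf' hne (fun a => (P ^ (n+1)) a j)
          ≤ (1 - 2*ϑ) * (Finset.univ.sup' hne x - Finset.univ.inf' hne x) := hcontr
        _ ≤ (1 - 2*ϑ) * (1 - 2*ϑ) ^ n := by
            exact mul_le_mul_of_nonneg_left ih h1sub
        _ = (1 - 2*ϑ) ^ (n+1) := by ring
  -- pv is stationary for P^n
  have hstatn' : ∀ m : ℕ, pv ᵥ* P ^ m = pv := by
    intro m
    induction m with
    | zero => simp [Matrix.vecMul_one]
    | succ k ih =>
      rw [pow_succ, ← Matrix.vecMul_vecMul, ih, hstat]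
  have hstatn : pv ᵥ* P ^ n = pv := hstatn' n
  have hpvj : pv j = ∑ a, pv a * (P ^ n) a j := by
    have := congrFun hstatn j
    rw [Matrix.vecMul, dotProduct] at this
    exact this.symm
  set M := Finset.univ.sup' hne (fun a => (P ^ n) a j) with hM
  set m := Finset.univ.inf' hne (fun a => (P ^ n) a j) with hm
  have hpvM : pv j ≤ M := by
    rw [hpvj]
    calc ∑ a, pv a * (P ^ n) a j ≤ ∑ a, pv a * M := by
          apply Finset.sum_le_sum
          intro a _
          exact mul_le_mul_of_nonneg_left
            (Finset.le_sup' (fun a => (P ^ n) a j) (Finset.mem_univ a)) (hpv0 a)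
      _ = M := by rw [← Finset.sum_mul, hpv1, one_mul]
  have hpvm : m ≤ pv j := by
    rw [hpvj]
    calc (m:ℝ) = ∑ a, pv a * m := by rw [← Finset.sum_mul, hpv1, one_mul]
      _ ≤ ∑ a, pv a * (P ^ n) a j := by
          apply Finset.sum_le_sum
          intro a _
          exact mul_le_mul_of_nonneg_left
            (Finset.inf'_le (fun a => (P ^ n) a j) (Finset.mem_univ a)) (hpv0 a)
  have hiM : (P ^ n) i j ≤ M := Finset.le_sup' (fun a => (P ^ n) a j) (Finset.mem_univ i)
  have him : m ≤ (P ^ n) i j := Finset.inf'_le (fun a => (P ^ n) a j) (Finset.mem_univ i)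
  have hosc := key n hn
  rw [abs_le]
  constructor <;> linarith
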